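/- arXiv:2104.14825 — 5 statements merged into one kernel-verified Lean document; each statement's English description precedes it below -/
import Mathlib

section
/- For $x_C > 0$, $L > 0$, $k > 0$, the integral $\mathscr{I}_3 = k^2 \int_{-L/2}^{L/2}\int_{-L/2}^{L/2} \frac{y^2(x_C^2+y^2)}{(x_C^2+y^2+z^2)^3}\,dy\,dz$ satisfies the upper bound $\mathscr{I}_3 \le k^2\left[\frac{3\pi}{8}\ln(1+2\rho^2) - \frac{\pi}{4}\frac{\rho^2(5\rho^2+3)}{(1+2\rho^2)^2}\right]$ where $\rho = L/x_C$. -/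
/-!
The integrand is nonnegative and the square `[-L/2, L/2]²` lies in the closed disk of radius
`R = √2 L`, so `𝓘₃ / k²` is at most the integral over that disk; this radius is the one for
which `(R / x_C)² = 2ρ²` gives the stated constants. In polar coordinates
`(z, y) = (r cos θ, r sin θ)` the integrand times `r` is
`(x_C² r³ sin² θ + r⁵ sin⁴ θ) / (x_C² + r²)³`, whose angular integral over `(-π, π)` is
`(π x_C² r³ + 3π/4 r⁵) / (x_C² + r²)³`. This has the elementary primitive
`3π/8 log (x_C² + r²) + π/4 x_C² / (x_C² + r²) + π/16 x_C⁴ / (x_C² + r²)²`.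
-/

open Real MeasureTheory Set

/-- The Euclidean disk; `Metric.closedBall` in `ℝ × ℝ` is a square, for the sup norm. -/
def closedDisk (R : ℝ) : Set (ℝ × ℝ) := {p | p.1 ^ 2 + p.2 ^ 2 ≤ R ^ 2}

theorem measurableSet_closedDisk (R : ℝ) : MeasurableSet (closedDisk R) :=
  measurableSet_le (by fun_prop) (by fun_prop)

theorem isCompact_closedDisk (R : ℝ) : IsCompact (closedDisk R) := by
  refine (isCompact_Icc.prod isCompact_Icc :
    IsCompact (Icc (-|R|) |R| ×ˢ Icc (-|R|) |R|)).of_isClosed_subset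
    (isClosed_le (by fun_prop) (by fun_prop)) ?_
  intro p hp
  have h1 : p.1 ^ 2 ≤ R ^ 2 := by have := sq_nonneg p.2; exact le_trans (by linarith) hp
  have h2 : p.2 ^ 2 ≤ R ^ 2 := by have := sq_nonneg p.1; exact le_trans (by linarith) hp
  exact ⟨abs_le.mp (sq_le_sq.mp h1), abs_le.mp (sq_le_sq.mp h2)⟩

theorem polarCoord_symm_mem_closedDisk_iff {r R : ℝ} (θ : ℝ) (hr : 0 ≤ r) (hR : 0 ≤ R) :
    polarCoord.symm (r, θ) ∈ closedDisk R ↔ r ≤ R := by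
  have h : (r * cos θ) ^ 2 + (r * sin θ) ^ 2 = r ^ 2 := by
    linear_combination r ^ 2 * cos_sq_add_sin_sq θ
  simp only [closedDisk, polarCoord_symm_apply, mem_ofPred_eq, h]
  exact pow_le_pow_iff_left₀ hr hR two_ne_zero

theorem Icc_prod_Icc_subset_closedDisk {L R : ℝ} (h : L ^ 2 ≤ 2 * R ^ 2) :
    Icc (-(L / 2)) (L / 2) ×ˢ Icc (-(L / 2)) (L / 2) ⊆ closedDisk R := by
  rintro p ⟨h1, h2⟩
  have h1' := sq_le_sq' h1.1 h1.2
  have h2' := sq_le_sq' h2.1 h2.2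
  simp only [closedDisk, mem_ofPred_eq]
  nlinarith

section

variable {E : Type*} [NormedAddCommGroup E] [NormedSpace ℝ E]

theorem integrableOn_comp_polarCoord_symm {f : ℝ × ℝ → E} (hf : Integrable f) :
    IntegrableOn (fun p => p.1 • f (polarCoord.symm p)) polarCoord.target := by
  have h := (integrableOn_image_iff_integrableOn_abs_det_fderiv_smul volume
    polarCoord.open_target.measurableSet
    (fun p _ => (hasFDerivAt_polarCoord_symm p).hasFDerivWithinAt) polarCoord.symm.injOn f).mp
  rw [polarCoord.symm_image_target_eq_source] at h
  refine (integrableOn_congr_fun (fun p hp => ?_) polarCoord.open_target.measurableSet).mp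
    (h hf.integrableOn)
  simp only [det_fderivPolarCoordSymm, abs_of_pos (show 0 < p.1 from hp.1)]

theorem setIntegral_closedDisk_eq_polar {f : ℝ × ℝ → E} {R : ℝ} (hR : 0 ≤ R)
    (hf : IntegrableOn f (closedDisk R)) :
    ∫ p in closedDisk R, f p =
      ∫ r in 0..R, ∫ θ in -π..π, r • f (polarCoord.symm (r, θ)) := by
  have hint := integrableOn_comp_polarCoord_symm
    ((integrable_indicator_iff (measurableSet_closedDisk R)).mpr hf)
  have hslice : ∀ r ∈ Ioi (0 : ℝ), ∫ θ in Ioo (-π) π,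
      r • (closedDisk R).indicator f (polarCoord.symm (r, θ)) =
      (Iic R).indicator (fun r => ∫ θ in -π..π, r • f (polarCoord.symm (r, θ))) r := by
    intro r hr
    by_cases hrR : r ≤ R
    · rw [indicator_of_mem (mem_Iic.mpr hrR),
        intervalIntegral.integral_of_le (by linarith [pi_pos]), integral_Ioc_eq_integral_Ioo]
      refine setIntegral_congr_fun measurableSet_Ioo fun θ _ => ?_
      rw [indicator_of_mem ((polarCoord_symm_mem_closedDisk_iff θ (le_of_lt hr) hR).mpr hrR)]
    · rw [indicator_of_notMem (by simpa using hrR)]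
      refine (setIntegral_congr_fun measurableSet_Ioo fun θ _ => ?_).trans (integral_zero _ _)
      rw [indicator_of_notMem (by rwa [polarCoord_symm_mem_closedDisk_iff θ (le_of_lt hr) hR]),
        smul_zero]
  rw [← integral_indicator (measurableSet_closedDisk R), ← integral_comp_polarCoord_symm,
    polarCoord_target, Measure.volume_eq_prod,
    setIntegral_prod _ (by rwa [← Measure.volume_eq_prod]),
    setIntegral_congr_fun measurableSet_Ioi hslice, setIntegral_indicator measurableSet_Iic,
    Ioi_inter_Iic, intervalIntegral.integral_of_le hR]

theorem intervalIntegral_intervalIntegral_eq_setIntegral_prod {f : ℝ × ℝ → E} {a b c d : ℝ}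
    (hab : a ≤ b) (hcd : c ≤ d) (hf : IntegrableOn f (Ioc a b ×ˢ Ioc c d)) :
    ∫ x in a..b, ∫ y in c..d, f (x, y) = ∫ p in Ioc a b ×ˢ Ioc c d, f p := by
  rw [Measure.volume_eq_prod, setIntegral_prod _ (by rwa [← Measure.volume_eq_prod]),
    intervalIntegral.integral_of_le hab]
  refine setIntegral_congr_fun measurableSet_Ioc fun x _ => ?_
  rw [intervalIntegral.integral_of_le hcd]

end

/-- The integrand of `𝓘₃` at `p = (z, y)`, with `z` the outer integration variable. -/
noncomputable def i3Integrand (a : ℝ) (p : ℝ × ℝ) : ℝ :=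
  p.2 ^ 2 * (a ^ 2 + p.2 ^ 2) / (a ^ 2 + p.2 ^ 2 + p.1 ^ 2) ^ 3

theorem i3Integrand_nonneg (a : ℝ) (p : ℝ × ℝ) : 0 ≤ i3Integrand a p := by
  unfold i3Integrand; positivity

theorem continuous_i3Integrand {a : ℝ} (ha : a ≠ 0) : Continuous (i3Integrand a) :=
  Continuous.div (by fun_prop) (by fun_prop) fun p => by positivity

theorem integrableOn_closedDisk_i3Integrand {a : ℝ} (ha : a ≠ 0) (R : ℝ) :
    IntegrableOn (i3Integrand a) (closedDisk R) :=
  (continuous_i3Integrand ha).continuousOn.integrableOn_compact (isCompact_closedDisk R)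

theorem mul_i3Integrand_polarCoord_symm {a : ℝ} (ha : a ≠ 0) (r θ : ℝ) :
    r * i3Integrand a (polarCoord.symm (r, θ)) =
      a ^ 2 * r ^ 3 / (a ^ 2 + r ^ 2) ^ 3 * sin θ ^ 2 +
        r ^ 5 / (a ^ 2 + r ^ 2) ^ 3 * sin θ ^ 4 := by
  have hr : a ^ 2 + (r * sin θ) ^ 2 + (r * cos θ) ^ 2 = a ^ 2 + r ^ 2 := by
    linear_combination r ^ 2 * sin_sq_add_cos_sq θ
  have hpos : a ^ 2 + r ^ 2 ≠ 0 := by positivity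
  simp only [i3Integrand, polarCoord_symm_apply, hr]
  field_simp

theorem integral_sin_pow_four_neg_pi_pi : ∫ θ in -π..π, sin θ ^ 4 = 3 * π / 4 := by
  have h := integral_sin_pow (a := -π) (b := π) 2
  norm_num at h
  rw [h]; ring

theorem integral_mul_i3Integrand_polarCoord_symm {a : ℝ} (ha : a ≠ 0) (r : ℝ) :
    ∫ θ in -π..π, r * i3Integrand a (polarCoord.symm (r, θ)) =
      (π * a ^ 2 * r ^ 3 + 3 * π / 4 * r ^ 5) / (a ^ 2 + r ^ 2) ^ 3 := by
  simp_rw [mul_i3Integrand_polarCoord_symm ha]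
  rw [intervalIntegral.integral_add (by apply Continuous.intervalIntegrable; fun_prop)
      (by apply Continuous.intervalIntegrable; fun_prop),
    intervalIntegral.integral_const_mul, intervalIntegral.integral_const_mul, integral_sin_sq,
    integral_sin_pow_four_neg_pi_pi]
  simp only [sin_neg, sin_pi, cos_neg, cos_pi]
  ring

theorem hasDerivAt_i3RadialPrimitive {a : ℝ} (ha : a ≠ 0) (r : ℝ) :
    HasDerivAt (fun t => 3 * π / 8 * log (a ^ 2 + t ^ 2) + π / 4 * (a ^ 2 / (a ^ 2 + t ^ 2))
        + π / 16 * (a ^ 4 / (a ^ 2 + t ^ 2) ^ 2))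
      ((π * a ^ 2 * r ^ 3 + 3 * π / 4 * r ^ 5) / (a ^ 2 + r ^ 2) ^ 3) r := by
  have hpos : a ^ 2 + r ^ 2 ≠ 0 := by positivity
  have hq : HasDerivAt (fun t => a ^ 2 + t ^ 2) (2 * r) r := by
    simpa using (hasDerivAt_pow 2 r).const_add (a ^ 2)
  have hlog := (hq.log hpos).const_mul (3 * π / 8)
  have hinv := ((hasDerivAt_const r (a ^ 2)).div hq hpos).const_mul (π / 4)
  have hq2 : HasDerivAt (fun t => (a ^ 2 + t ^ 2) ^ 2) (2 * (a ^ 2 + r ^ 2) ^ 1 * (2 * r)) r :=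
    hq.pow 2
  have hinv2 := ((hasDerivAt_const r (a ^ 4)).div hq2 (pow_ne_zero 2 hpos)).const_mul (π / 16)
  refine ((hlog.add hinv).add hinv2).congr_deriv ?_
  field_simp
  ring

theorem setIntegral_closedDisk_i3Integrand {a R : ℝ} (ha : a ≠ 0) (hR : 0 ≤ R) :
    ∫ p in closedDisk R, i3Integrand a p =
      3 * π / 8 * log (1 + (R / a) ^ 2) -
        π / 16 * ((R / a) ^ 2 * (5 * (R / a) ^ 2 + 6) / (1 + (R / a) ^ 2) ^ 2) := by
  have hcont :
      Continuous fun r => (π * a ^ 2 * r ^ 3 + 3 * π / 4 * r ^ 5) / (a ^ 2 + r ^ 2) ^ 3 :=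
    Continuous.div (by fun_prop) (by fun_prop) fun r => by positivity
  simp_rw [setIntegral_closedDisk_eq_polar hR (integrableOn_closedDisk_i3Integrand ha R),
    smul_eq_mul,
    integral_mul_i3Integrand_polarCoord_symm ha,
    intervalIntegral.integral_eq_sub_of_hasDerivAt (fun r _ => hasDerivAt_i3RadialPrimitive ha r)
      (hcont.intervalIntegrable _ _)]
  have hlog : log (a ^ 2 + R ^ 2) = log (a ^ 2) + log (1 + (R / a) ^ 2) := by
    rw [← log_mul (by positivity) (by positivity)]
    congr 1
    field_simp
  rw [zero_pow two_ne_zero, add_zero, hlog]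
  field_simp
  ring

theorem I3_upper_bound_general (xC L k ρ : ℝ) (hx : 0 < xC) (hL : 0 < L)
    (hρ : ρ = L / xC) :
    k ^ 2 *
      ∫ z in (-(L/2))..(L/2), ∫ y in (-(L/2))..(L/2),
        y ^ 2 * (xC ^ 2 + y ^ 2) / (xC ^ 2 + y ^ 2 + z ^ 2) ^ 3 ≤
    k ^ 2 * (3 * Real.pi / 8 * Real.log (1 + 2 * ρ ^ 2) -
      Real.pi / 4 * (ρ ^ 2 * (5 * ρ ^ 2 + 3) / (1 + 2 * ρ ^ 2) ^ 2)) := by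
  set R := √2 * L
  have hR : (R / xC) ^ 2 = 2 * ρ ^ 2 := by
    rw [hρ, div_pow, div_pow, mul_pow, sq_sqrt zero_le_two]
    ring
  have hsquare : Ioc (-(L / 2)) (L / 2) ×ˢ Ioc (-(L / 2)) (L / 2) ⊆ closedDisk R :=
    (prod_mono Ioc_subset_Icc_self Ioc_subset_Icc_self).trans
      (Icc_prod_Icc_subset_closedDisk (by rw [mul_pow, sq_sqrt zero_le_two]; nlinarith))
  have hint := integrableOn_closedDisk_i3Integrand hx.ne' R
  refine mul_le_mul_of_nonneg_left ?_ (sq_nonneg k)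
  calc _ = ∫ p in Ioc (-(L / 2)) (L / 2) ×ˢ Ioc (-(L / 2)) (L / 2), i3Integrand xC p :=
        intervalIntegral_intervalIntegral_eq_setIntegral_prod (by linarith) (by linarith)
          (hint.mono_set hsquare)
    _ ≤ ∫ p in closedDisk R, i3Integrand xC p :=
        setIntegral_mono_set hint (.of_forall (i3Integrand_nonneg xC)) hsquare.eventuallyLE
    _ = _ := by
        rw [setIntegral_closedDisk_i3Integrand hx.ne' (by positivity), hR]
        ring

theorem I3_upper_bound (xC L k ρ : ℝ) (hx : 0 < xC) (hL : 0 < L) (hk : 0 < k)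
    (hρ : ρ = L / xC) :
    k ^ 2 *
      ∫ z in (-(L/2))..(L/2), ∫ y in (-(L/2))..(L/2),
        y ^ 2 * (xC ^ 2 + y ^ 2) / (xC ^ 2 + y ^ 2 + z ^ 2) ^ 3 ≤
    k ^ 2 * (3 * Real.pi / 8 * Real.log (1 + 2 * ρ ^ 2) -
      Real.pi / 4 * (ρ ^ 2 * (5 * ρ ^ 2 + 3) / (1 + 2 * ρ ^ 2) ^ 2)) :=
  I3_upper_bound_general xC L k ρ hx hL hρ
end

section
/- For $x_C > 0$, $L > 0$, $k > 0$, the integral $\mathscr{I}_5 = k^2 \int_{-L/2}^{L/2}\int_{-L/2}^{L/2} \frac{z^2(x_C^2+y^2)}{(x_C^2+y^2+z^2)^3}\,dy\,dz$ satisfies $\mathscr{I}_5 \le k^2\left[\frac{\pi}{8}\ln(1+2\rho^2) + \frac{\pi}{4}\frac{\rho^2(\rho^2-1)}{(1+2\rho^2)^2}\right]$ where $\rho = L/x_C$. -/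
/-!
The integrand is nonnegative, so the integral over the square `[-L/2, L/2]²` is at most the
integral over any disk containing it. In polar coordinates, with `a = x_C²`, the angular integral
is elementary and the radial one has the closed form
`π/8 log(1 + R²/a) + π/16 R²(R² - 2a)/(a + R²)²`. The stated bound
is this value for the disk of radius `√2 L`, i.e. `R² / a = 2ρ²`; the circumscribed disk of
radius `L/√2` would give the same expression at `ρ²/4` in place of `ρ²`.
-/

open Real MeasureTheory Set Function

def disk (R : ℝ) : Set (ℝ × ℝ) := {q | q.1 ^ 2 + q.2 ^ 2 ≤ R ^ 2}

lemma measurableSet_disk (R : ℝ) : MeasurableSet (disk R) :=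
  (isClosed_le (by fun_prop) continuous_const).measurableSet

lemma Ioc_prod_Ioc_subset_disk {c R : ℝ} (hcR : 2 * c ^ 2 ≤ R ^ 2) :
    Ioc (-c) c ×ˢ Ioc (-c) c ⊆ disk R := by
  rintro ⟨z, y⟩ ⟨hz, hy⟩
  have hz2 : z ^ 2 ≤ c ^ 2 := sq_le_sq' (by linarith [hz.1]) hz.2
  have hy2 : y ^ 2 ≤ c ^ 2 := sq_le_sq' (by linarith [hy.1]) hy.2
  show z ^ 2 + y ^ 2 ≤ R ^ 2
  linarith

lemma disk_subset_Icc_prod_Icc {R : ℝ} (hR : 0 ≤ R) :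
    disk R ⊆ Icc (-R) R ×ˢ Icc (-R) R := by
  rintro ⟨z, y⟩ h
  change z ^ 2 + y ^ 2 ≤ R ^ 2 at h
  exact ⟨abs_le_of_sq_le_sq' (by nlinarith [sq_nonneg y]) hR,
    abs_le_of_sq_le_sq' (by nlinarith [sq_nonneg z]) hR⟩

lemma integrableOn_Icc_prod_Icc {f : ℝ × ℝ → ℝ} (hf : Continuous f) (a b c d : ℝ) :
    IntegrableOn f (Icc a b ×ˢ Icc c d) :=
  hf.continuousOn.integrableOn_compact (isCompact_Icc.prod isCompact_Icc)

lemma integral_integral_le_setIntegral_disk {F : ℝ → ℝ → ℝ} (hF : Continuous (uncurry F))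
    (hF₀ : ∀ z y, 0 ≤ F z y) {c R : ℝ} (hc : 0 ≤ c) (hR : 0 ≤ R)
    (hcR : 2 * c ^ 2 ≤ R ^ 2) :
    ∫ z in (-c)..c, ∫ y in (-c)..c, F z y ≤ ∫ p in disk R, uncurry F p := by
  have hsquare : IntegrableOn (uncurry F) (Ioc (-c) c ×ˢ Ioc (-c) c) :=
    (integrableOn_Icc_prod_Icc hF _ _ _ _).mono_set
      (prod_mono Ioc_subset_Icc_self Ioc_subset_Icc_self)
  have hdisk : IntegrableOn (uncurry F) (disk R) :=
    (integrableOn_Icc_prod_Icc hF _ _ _ _).mono_set (disk_subset_Icc_prod_Icc hR)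
  calc ∫ z in (-c)..c, ∫ y in (-c)..c, F z y
      = ∫ p in Ioc (-c) c ×ˢ Ioc (-c) c, uncurry F p := by
        rw [Measure.volume_eq_prod, setIntegral_prod _ hsquare,
          intervalIntegral.integral_of_le (by linarith)]
        refine setIntegral_congr_fun measurableSet_Ioc fun z _ => ?_
        exact intervalIntegral.integral_of_le (by linarith)
    _ ≤ ∫ p in disk R, uncurry F p :=
        setIntegral_mono_set hdisk (.of_forall fun p => hF₀ p.1 p.2)
          (Ioc_prod_Ioc_subset_disk hcR).eventuallyLE

lemma setIntegral_disk_eq_integral_polar {F : ℝ → ℝ → ℝ} (hF : Continuous (uncurry F))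
    {R : ℝ} (hR : 0 ≤ R) :
    ∫ p in disk R, uncurry F p =
      ∫ r in 0..R, ∫ θ in (-π)..π, r * F (r * cos θ) (r * sin θ) := by
  have hpre : polarCoord.symm ⁻¹' disk R = {p | p.1 ^ 2 ≤ R ^ 2} := by
    ext p
    simp only [mem_preimage, polarCoord_symm_apply, disk, mem_ofPred_eq]
    rw [show (p.1 * cos p.2) ^ 2 + (p.1 * sin p.2) ^ 2 = p.1 ^ 2 by
      linear_combination p.1 ^ 2 * cos_sq_add_sin_sq p.2]
  have hdom : polarCoord.target ∩ {p | p.1 ^ 2 ≤ R ^ 2} = Ioc 0 R ×ˢ Ioo (-π) π := by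
    ext ⟨r, θ⟩
    simp only [polarCoord_target, mem_inter_iff, mem_prod, mem_Ioi, mem_ofPred_eq, mem_Ioc]
    constructor
    · rintro ⟨⟨hr, hθ⟩, hrR⟩
      exact ⟨⟨hr, (abs_le_of_sq_le_sq' hrR hR).2⟩, hθ⟩
    · rintro ⟨⟨hr, hrR⟩, hθ⟩
      exact ⟨⟨hr, hθ⟩, pow_le_pow_left₀ hr.le hrR 2⟩
  have hpolar : IntegrableOn (fun p : ℝ × ℝ => p.1 * F (p.1 * cos p.2) (p.1 * sin p.2))
      (Ioc 0 R ×ˢ Ioo (-π) π) :=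
    (integrableOn_Icc_prod_Icc (by fun_prop) _ _ _ _).mono_set
      (prod_mono Ioc_subset_Icc_self Ioo_subset_Icc_self)
  have hind : ∀ p : ℝ × ℝ, p.1 • (disk R).indicator (uncurry F) (polarCoord.symm p) =
      {p : ℝ × ℝ | p.1 ^ 2 ≤ R ^ 2}.indicator
        (fun p => p.1 * F (p.1 * cos p.2) (p.1 * sin p.2)) p := by
    intro p
    rw [← hpre, ← indicator_comp_right, ← indicator_smul_apply]
    rfl
  rw [← integral_indicator (measurableSet_disk R), ← integral_comp_polarCoord_symm]
  simp_rw [hind]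
  rw [setIntegral_indicator (measurableSet_le (by fun_prop) (by fun_prop)), hdom,
    Measure.volume_eq_prod, setIntegral_prod _ hpolar, intervalIntegral.integral_of_le hR]
  refine setIntegral_congr_fun measurableSet_Ioc fun r _ => ?_
  rw [intervalIntegral.integral_of_le (by linarith [pi_pos]), integral_Ioc_eq_integral_Ioo]

noncomputable def I5Integrand (a z y : ℝ) : ℝ := z ^ 2 * (a + y ^ 2) / (a + y ^ 2 + z ^ 2) ^ 3

noncomputable def I5RadialPrimitive (a r : ℝ) : ℝ :=
  π / 8 * log (1 + r ^ 2 / a) + π / 16 * (r ^ 2 * (r ^ 2 - 2 * a) / (a + r ^ 2) ^ 2)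

lemma I5Integrand_nonneg {a : ℝ} (ha : 0 ≤ a) (z y : ℝ) : 0 ≤ I5Integrand a z y := by
  unfold I5Integrand; positivity

section

variable {a : ℝ} (ha : 0 < a)
include ha

lemma continuous_uncurry_I5Integrand : Continuous (uncurry (I5Integrand a)) :=
  Continuous.div (by fun_prop) (by fun_prop) fun q => by positivity

lemma integral_angular_I5Integrand (r : ℝ) :
    ∫ θ in (-π)..π, r * I5Integrand a (r * cos θ) (r * sin θ) =
      π / 4 * r ^ 3 * (r ^ 2 + 4 * a) / (a + r ^ 2) ^ 3 := by
  have hpos : a + r ^ 2 ≠ 0 := by positivity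
  have hsplit : ∀ θ : ℝ, r * I5Integrand a (r * cos θ) (r * sin θ) =
      r ^ 3 * a / (a + r ^ 2) ^ 3 * cos θ ^ 2 +
        r ^ 5 / (a + r ^ 2) ^ 3 * (sin θ ^ 2 * cos θ ^ 2) := by
    intro θ
    rw [I5Integrand, show a + (r * sin θ) ^ 2 + (r * cos θ) ^ 2 = a + r ^ 2 by
      linear_combination r ^ 2 * sin_sq_add_cos_sq θ]
    field_simp
  simp_rw [hsplit]
  rw [intervalIntegral.integral_add ((by fun_prop : Continuous _).intervalIntegrable _ _)
      ((by fun_prop : Continuous _).intervalIntegrable _ _),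
    intervalIntegral.integral_const_mul, intervalIntegral.integral_const_mul,
    integral_cos_sq, integral_sin_sq_mul_cos_sq]
  have h4 : sin (4 * π) = 0 := by simpa using sin_nat_mul_pi 4
  simp only [sin_neg, cos_neg, sin_pi, mul_neg, h4]
  field_simp
  ring

lemma hasDerivAt_I5RadialPrimitive (r : ℝ) :
    HasDerivAt (I5RadialPrimitive a) (π / 4 * r ^ 3 * (r ^ 2 + 4 * a) / (a + r ^ 2) ^ 3) r := by
  have hpos : a + r ^ 2 ≠ 0 := by positivity
  have h1 : 1 + r ^ 2 / a ≠ 0 := by positivity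
  have hlog := ((((hasDerivAt_pow 2 r).div_const a).const_add 1).log h1).const_mul (π / 8)
  have hrat := ((((hasDerivAt_pow 2 r).mul ((hasDerivAt_pow 2 r).sub_const (2 * a))).div
    (((hasDerivAt_pow 2 r).const_add a).pow 2) (pow_ne_zero 2 hpos))).const_mul (π / 16)
  refine (hlog.add hrat).congr_deriv ?_
  simp only [Pi.mul_apply, Pi.pow_apply]
  field_simp
  ring

lemma setIntegral_disk_I5Integrand {R : ℝ} (hR : 0 ≤ R) :
    ∫ p in disk R, uncurry (I5Integrand a) p = I5RadialPrimitive a R := by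
  have hradial : Continuous fun r : ℝ => π / 4 * r ^ 3 * (r ^ 2 + 4 * a) / (a + r ^ 2) ^ 3 :=
    Continuous.div (by fun_prop) (by fun_prop) fun r => by positivity
  rw [setIntegral_disk_eq_integral_polar (continuous_uncurry_I5Integrand ha) hR]
  simp_rw [integral_angular_I5Integrand ha]
  rw [intervalIntegral.integral_eq_sub_of_hasDerivAt
    (fun r _ => hasDerivAt_I5RadialPrimitive ha r) (hradial.intervalIntegrable _ _)]
  simp [I5RadialPrimitive]

end

theorem I5_upper_bound_general (xC L k ρ : ℝ) (hx : 0 < xC) (hL : 0 < L)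
    (hρ : ρ = L / xC) :
    k ^ 2 *
      ∫ z in (-(L/2))..(L/2), ∫ y in (-(L/2))..(L/2),
        z ^ 2 * (xC ^ 2 + y ^ 2) / (xC ^ 2 + y ^ 2 + z ^ 2) ^ 3 ≤
    k ^ 2 * (Real.pi / 8 * Real.log (1 + 2 * ρ ^ 2) +
      Real.pi / 4 * (ρ ^ 2 * (ρ ^ 2 - 1) / (1 + 2 * ρ ^ 2) ^ 2)) := by
  have ha : 0 < xC ^ 2 := by positivity
  have hR : (√2 * L) ^ 2 = 2 * L ^ 2 := by rw [mul_pow, sq_sqrt zero_le_two]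
  refine mul_le_mul_of_nonneg_left ?_ (sq_nonneg k)
  calc _ ≤ ∫ p in disk (√2 * L), uncurry (I5Integrand (xC ^ 2)) p :=
        integral_integral_le_setIntegral_disk (continuous_uncurry_I5Integrand ha)
          (I5Integrand_nonneg ha.le) (by positivity) (by positivity) (by rw [hR]; nlinarith)
    _ = _ := by
        rw [setIntegral_disk_I5Integrand ha (by positivity), I5RadialPrimitive, hR, hρ, div_pow]
        field_simp
        ring

theorem I5_upper_bound (xC L k ρ : ℝ) (hx : 0 < xC) (hL : 0 < L) (hk : 0 < k)
    (hρ : ρ = L / xC) :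
    k ^ 2 *
      ∫ z in (-(L/2))..(L/2), ∫ y in (-(L/2))..(L/2),
        z ^ 2 * (xC ^ 2 + y ^ 2) / (xC ^ 2 + y ^ 2 + z ^ 2) ^ 3 ≤
    k ^ 2 * (Real.pi / 8 * Real.log (1 + 2 * ρ ^ 2) +
      Real.pi / 4 * (ρ ^ 2 * (ρ ^ 2 - 1) / (1 + 2 * ρ ^ 2) ^ 2)) :=
  I5_upper_bound_general xC L k ρ hx hL hρ
end

section
/- In polar coordinates, for any $R > 0$ and $x_C > 0$, $\int_0^{2\pi}\int_0^R \frac{s^2\cos^2\phi\,(x_C^2 + s^2\cos^2\phi)}{(x_C^2+s^2)^3}\,s\,ds\,d\phi = \frac{3\pi}{8}\ln\left(1+\frac{R^2}{x_C^2}\right) - \frac{\pi}{16}\frac{(R^2/x_C^2)(5R^2/x_C^2+6)}{(1+R^2/x_C^2)^2}$. -/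
/-!
Expanding `x_C² + s² cos² φ` splits the integrand into
`cos² φ · x_C² s³ / (x_C² + s²)³ + cos⁴ φ · s⁵ / (x_C² + s²)³`, so the double integral is a
combination of two radial integrals, with elementary primitives in `u = x_C² + s²`, weighted by
`∫ cos² = π` and `∫ cos⁴ = 3π/4` over a period.
-/

open Real MeasureTheory

theorem hasDerivAt_add_sq (a s : ℝ) : HasDerivAt (fun t : ℝ => a + t ^ 2) (2 * s) s := by
  simpa using (hasDerivAt_pow 2 s).const_add a

section Radial

variable {a : ℝ}

theorem hasDerivAt_primitive_pow_three_div (ha : 0 < a) (s : ℝ) :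
    HasDerivAt (fun t : ℝ => -1 / (2 * (a + t ^ 2)) + a / (4 * (a + t ^ 2) ^ 2))
      (s ^ 3 / (a + s ^ 2) ^ 3) s := by
  have hpos : 0 < a + s ^ 2 := by positivity
  have hq := hasDerivAt_add_sq a s
  have h := ((hasDerivAt_const s (-1 : ℝ)).div (hq.const_mul 2) (by positivity)).add
    ((hasDerivAt_const s a).div ((hq.fun_pow 2).const_mul 4) (by positivity))
  refine h.congr_deriv ?_
  field_simp
  ring

theorem hasDerivAt_primitive_pow_five_div (ha : 0 < a) (s : ℝ) :
    HasDerivAt (fun t : ℝ => log (a + t ^ 2) / 2 + a / (a + t ^ 2) - a ^ 2 / (4 * (a + t ^ 2) ^ 2))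
      (s ^ 5 / (a + s ^ 2) ^ 3) s := by
  have hpos : 0 < a + s ^ 2 := by positivity
  have hq := hasDerivAt_add_sq a s
  have h := (((hq.log hpos.ne').div_const 2).add ((hasDerivAt_const s a).div hq hpos.ne')).sub
    ((hasDerivAt_const s (a ^ 2)).div ((hq.fun_pow 2).const_mul 4) (by positivity))
  refine h.congr_deriv ?_
  field_simp
  ring

theorem continuous_pow_div_add_sq_pow_three (ha : 0 < a) (n : ℕ) :
    Continuous fun s : ℝ => s ^ n / (a + s ^ 2) ^ 3 :=
  (continuous_pow n).div (by fun_prop) fun s => by positivity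

theorem integral_pow_three_div_add_sq_pow_three (ha : 0 < a) (R : ℝ) :
    ∫ s in (0 : ℝ)..R, s ^ 3 / (a + s ^ 2) ^ 3 = R ^ 4 / (4 * a * (a + R ^ 2) ^ 2) := by
  have hR : 0 < a + R ^ 2 := by positivity
  rw [intervalIntegral.integral_eq_sub_of_hasDerivAt
    (fun s _ => hasDerivAt_primitive_pow_three_div ha s)
    ((continuous_pow_div_add_sq_pow_three ha 3).intervalIntegrable 0 R)]
  field_simp
  ring

theorem integral_pow_five_div_add_sq_pow_three (ha : 0 < a) (R : ℝ) :
    ∫ s in (0 : ℝ)..R, s ^ 5 / (a + s ^ 2) ^ 3 =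
      log (1 + R ^ 2 / a) / 2 - R ^ 2 * (3 * R ^ 2 + 2 * a) / (4 * (a + R ^ 2) ^ 2) := by
  have hR : 0 < a + R ^ 2 := by positivity
  rw [intervalIntegral.integral_eq_sub_of_hasDerivAt
    (fun s _ => hasDerivAt_primitive_pow_five_div ha s)
    ((continuous_pow_div_add_sq_pow_three ha 5).intervalIntegrable 0 R),
    show 1 + R ^ 2 / a = (a + R ^ 2) / a by field_simp, log_div hR.ne' ha.ne',
    zero_pow two_ne_zero, add_zero]
  field_simp
  ring

theorem integral_radial_eq (ha : 0 < a) (R c : ℝ) :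
    ∫ s in (0 : ℝ)..R, s ^ 2 * c ^ 2 * (a + s ^ 2 * c ^ 2) / (a + s ^ 2) ^ 3 * s =
      c ^ 2 * (a * ∫ s in (0 : ℝ)..R, s ^ 3 / (a + s ^ 2) ^ 3) +
        c ^ 4 * ∫ s in (0 : ℝ)..R, s ^ 5 / (a + s ^ 2) ^ 3 := by
  have h3 : IntervalIntegrable (fun s => s ^ 3 / (a + s ^ 2) ^ 3) volume 0 R :=
    (continuous_pow_div_add_sq_pow_three ha 3).intervalIntegrable 0 R
  have h5 : IntervalIntegrable (fun s => s ^ 5 / (a + s ^ 2) ^ 3) volume 0 R :=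
    (continuous_pow_div_add_sq_pow_three ha 5).intervalIntegrable 0 R
  rw [← intervalIntegral.integral_const_mul, ← intervalIntegral.integral_const_mul,
    ← intervalIntegral.integral_const_mul, ← intervalIntegral.integral_add
      ((h3.const_mul a).const_mul _) (h5.const_mul _)]
  congr 1 with s
  ring

end Radial

theorem integral_cos_sq_zero_two_pi : ∫ φ in (0 : ℝ)..2 * π, cos φ ^ 2 = π := by
  simp [integral_cos_sq]

theorem integral_cos_pow_four_zero_two_pi : ∫ φ in (0 : ℝ)..2 * π, cos φ ^ 4 = 3 * π / 4 := by
  rw [integral_cos_pow (n := 2), integral_cos_sq_zero_two_pi]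
  norm_num
  ring

theorem integral_cos_sq_mul_add_cos_pow_four_mul (A B : ℝ) :
    ∫ φ in (0 : ℝ)..2 * π, cos φ ^ 2 * A + cos φ ^ 4 * B = π * A + 3 * π / 4 * B := by
  rw [intervalIntegral.integral_add
    ((by fun_prop : Continuous _).intervalIntegrable _ _)
    ((by fun_prop : Continuous _).intervalIntegrable _ _), intervalIntegral.integral_mul_const,
    intervalIntegral.integral_mul_const, integral_cos_sq_zero_two_pi,
    integral_cos_pow_four_zero_two_pi]

theorem I3_disk_polar_general (R xC : ℝ) (hx : 0 < xC) :
    (∫ φ in (0 : ℝ)..(2 * Real.pi), ∫ s in (0 : ℝ)..R,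
        s ^ 2 * Real.cos φ ^ 2 * (xC ^ 2 + s ^ 2 * Real.cos φ ^ 2) /
          (xC ^ 2 + s ^ 2) ^ 3 * s) =
    3 * Real.pi / 8 * Real.log (1 + R ^ 2 / xC ^ 2) -
      Real.pi / 16 *
        ((R ^ 2 / xC ^ 2) * (5 * (R ^ 2 / xC ^ 2) + 6) /
          (1 + R ^ 2 / xC ^ 2) ^ 2) := by
  have ha : 0 < xC ^ 2 := by positivity
  simp_rw [integral_radial_eq ha R, integral_cos_sq_mul_add_cos_pow_four_mul,
    integral_pow_three_div_add_sq_pow_three ha, integral_pow_five_div_add_sq_pow_three ha]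
  field_simp
  ring

theorem I3_disk_polar (R xC : ℝ) (hR : 0 < R) (hx : 0 < xC) :
    (∫ φ in (0 : ℝ)..(2 * Real.pi), ∫ s in (0 : ℝ)..R,
        s ^ 2 * Real.cos φ ^ 2 * (xC ^ 2 + s ^ 2 * Real.cos φ ^ 2) /
          (xC ^ 2 + s ^ 2) ^ 3 * s) =
    3 * Real.pi / 8 * Real.log (1 + R ^ 2 / xC ^ 2) -
      Real.pi / 16 *
        ((R ^ 2 / xC ^ 2) * (5 * (R ^ 2 / xC ^ 2) + 6) /
          (1 + R ^ 2 / xC ^ 2) ^ 2) :=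
  I3_disk_polar_general R xC hx
end

section
/- With $k = 2\pi/\lambda$ and $\rho > 0$, both bounds $\mathscr{I}_5^{(l)}(\rho) = k^2[\frac{\pi}{8}\ln(1+\rho^2) + \frac{\pi}{16}\frac{\rho^2(\rho^2-2)}{(1+\rho^2)^2}]$ and $\mathscr{I}_5^{(u)}(\rho) = k^2[\frac{\pi}{8}\ln(1+2\rho^2) + \frac{\pi}{4}\frac{\rho^2(\rho^2-1)}{(1+2\rho^2)^2}]$ satisfy $\lim_{\rho\to\infty} \frac{\ln\rho}{\mathscr{I}_5^{(\cdot)}(\rho)} = \frac{\lambda^2}{\pi^3}$. -/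
/-!
Both bounds have the form `k² (π/8 · log (1 + c ρ²) + C · r ρ)` with `c > 0` and `r` a rational
function converging to `1 / c²`. Since `log (1 + c ρ²) = 2 log ρ + log (ρ⁻² + c)`, the bound
divided by `log ρ` tends to `k² π / 4 = π³ / λ²`, and the claim is the reciprocal of this limit.
-/

open Real Filter Topology

lemma tendsto_log_one_add_mul_sq_div_log {c : ℝ} (hc : 0 < c) :
    Tendsto (fun ρ : ℝ => log (1 + c * ρ ^ 2) / log ρ) atTop (𝓝 2) := by
  have hlog_const : Tendsto (fun ρ : ℝ => log (ρ⁻¹ ^ 2 + c)) atTop (𝓝 (log c)) := by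
    have h : Tendsto (fun ρ : ℝ => ρ⁻¹ ^ 2 + c) atTop (𝓝 c) := by
      simpa using (tendsto_inv_atTop_zero.pow 2).add (tendsto_const_nhds (x := c))
    exact ((continuousAt_log hc.ne').tendsto).comp h
  have hlim : Tendsto (fun ρ : ℝ => 2 + log (ρ⁻¹ ^ 2 + c) / log ρ) atTop (𝓝 2) := by
    simpa using (hlog_const.div_atTop tendsto_log_atTop).const_add 2
  refine hlim.congr' ?_
  filter_upwards [eventually_gt_atTop 1] with ρ hρ
  have hρ0 : 0 < ρ := one_pos.trans hρ
  have hlogρ : log ρ ≠ 0 := (log_pos hρ).ne'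
  have hsplit : 1 + c * ρ ^ 2 = ρ ^ 2 * (ρ⁻¹ ^ 2 + c) := by field_simp
  rw [hsplit, log_mul (by positivity) (by positivity), log_pow, add_div,
    mul_div_cancel_right₀ _ hlogρ]
  norm_num

lemma tendsto_sq_mul_sub_div_one_add_mul_sq_sq (a : ℝ) {b : ℝ} (hb : 0 < b) :
    Tendsto (fun ρ : ℝ => ρ ^ 2 * (ρ ^ 2 - a) / (1 + b * ρ ^ 2) ^ 2) atTop (𝓝 (1 / b ^ 2)) := by
  have hinv_sq : Tendsto (fun ρ : ℝ => ρ⁻¹ ^ 2) atTop (𝓝 0) := by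
    simpa using (tendsto_inv_atTop_zero (𝕜 := ℝ)).pow 2
  have hlim : Tendsto (fun ρ : ℝ => (1 - a * ρ⁻¹ ^ 2) / (ρ⁻¹ ^ 2 + b) ^ 2) atTop
      (𝓝 ((1 - a * 0) / (0 + b) ^ 2)) :=
    (tendsto_const_nhds.sub (hinv_sq.const_mul a)).div
      ((hinv_sq.add tendsto_const_nhds).pow 2) (by positivity)
  rw [mul_zero, sub_zero, zero_add] at hlim
  refine hlim.congr' ?_
  filter_upwards [eventually_gt_atTop 0] with ρ hρ
  have : 1 + b * ρ ^ 2 ≠ 0 := by positivity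
  field_simp

lemma tendsto_log_div_of_tendsto_div_log {f : ℝ → ℝ} {L : ℝ}
    (h : Tendsto (fun ρ => f ρ / log ρ) atTop (𝓝 L)) (hL : L ≠ 0) :
    Tendsto (fun ρ => log ρ / f ρ) atTop (𝓝 L⁻¹) := by
  simpa only [inv_div] using h.inv₀ hL

lemma tendsto_log_div_mul_log_one_add_mul_sq_add {A B C c l : ℝ} {r : ℝ → ℝ}
    (hAB : A * B ≠ 0) (hc : 0 < c) (hr : Tendsto r atTop (𝓝 l)) :
    Tendsto (fun ρ => log ρ / (A * (B * log (1 + c * ρ ^ 2) + C * r ρ))) atTop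
      (𝓝 (2 * A * B)⁻¹) := by
  refine tendsto_log_div_of_tendsto_div_log ?_
    (by rw [mul_assoc]; exact mul_ne_zero two_ne_zero hAB)
  have hquot : Tendsto (fun ρ => A * (B * (log (1 + c * ρ ^ 2) / log ρ) + C * (r ρ / log ρ)))
      atTop (𝓝 (A * (B * 2 + C * 0))) :=
    (((tendsto_log_one_add_mul_sq_div_log hc).const_mul B).add
      ((hr.div_atTop tendsto_log_atTop).const_mul C)).const_mul A
  convert hquot using 1
  · ext ρ; ring
  · congr 1; ring

theorem CRB_zC_limits (k lam : ℝ) (hlam : 0 < lam) (hk : k = 2 * Real.pi / lam) :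
    Filter.Tendsto
        (fun ρ : ℝ =>
          Real.log ρ /
            (k ^ 2 * (Real.pi / 8 * Real.log (1 + ρ ^ 2) +
              Real.pi / 16 * (ρ ^ 2 * (ρ ^ 2 - 2) / (1 + ρ ^ 2) ^ 2))))
        Filter.atTop (nhds (lam ^ 2 / Real.pi ^ 3)) ∧
    Filter.Tendsto
        (fun ρ : ℝ =>
          Real.log ρ /
            (k ^ 2 * (Real.pi / 8 * Real.log (1 + 2 * ρ ^ 2) +
              Real.pi / 4 * (ρ ^ 2 * (ρ ^ 2 - 1) / (1 + 2 * ρ ^ 2) ^ 2))))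
        Filter.atTop (nhds (lam ^ 2 / Real.pi ^ 3)) := by
  have hAB : k ^ 2 * (π / 8) ≠ 0 := by rw [hk]; positivity
  have hlimit : (2 * k ^ 2 * (π / 8))⁻¹ = lam ^ 2 / π ^ 3 := by
    rw [hk]; field_simp; ring
  rw [← hlimit]
  constructor
  · simpa using tendsto_log_div_mul_log_one_add_mul_sq_add hAB one_pos
      (tendsto_sq_mul_sub_div_one_add_mul_sq_sq 2 one_pos) (C := π / 16)
  · exact tendsto_log_div_mul_log_one_add_mul_sq_add hAB two_pos
      (tendsto_sq_mul_sub_div_one_add_mul_sq_sq 1 two_pos)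
end

section
/- For fixed $k>0$ and $x_C>0$, the function $\mathscr{I}_1(\rho) = \frac{\rho k^2}{2(1+\rho^2)}\left[\frac{7+6\rho^2}{\sqrt{1+\rho^2}}\arctan\frac{\rho}{\sqrt{1+\rho^2}} + \frac{\rho}{1+2\rho^2}\right]$ is strictly positive for all $\rho > 0$ and satisfies $\mathscr{I}_1(\rho) \le \frac{3\pi}{4}k^2$ in the limit sense, i.e. $\sup_{\rho>0}\mathscr{I}_1(\rho) = \frac{3\pi}{4}k^2$; consequently $\mathrm{CRB}(x_C) \approx \mathrm{SNR}^{-1}/\mathscr{I}_1(\rho) \ge \frac{\mathrm{SNR}^{-1}\lambda^2}{3\pi^3}$ for all $\rho>0$ when $k = 2\pi/\lambda$. -/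
/-!
Substituting `t = sin (arctan ρ) = ρ / √(1 + ρ²)`, which increases from `0` to `1` on `ρ > 0`,
turns `𝓘₁(ρ) / k²` into `t (7 - t²) / 2 · arctan t + t² (1 - t²) / (2 (1 + t²))`. Bounding
`arctan t ≤ π / 4`, the gap to `3π / 4` becomes `π / 8 · (1 - t)(3 + t)(2 - t)` minus a term at most
`1 - t`, hence nonnegative; the bound is attained at `t = 1`, i.e. approached as `ρ → ∞`.
-/

open Real Filter Topology Set

noncomputable def I1 (k ρ : ℝ) : ℝ :=
  ρ * k ^ 2 / (2 * (1 + ρ ^ 2)) *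
    ((7 + 6 * ρ ^ 2) / √(1 + ρ ^ 2) * arctan (ρ / √(1 + ρ ^ 2)) + ρ / (1 + 2 * ρ ^ 2))

noncomputable def reducedI1 (t : ℝ) : ℝ :=
  t * (7 - t ^ 2) / 2 * arctan t + t ^ 2 * (1 - t ^ 2) / (2 * (1 + t ^ 2))

theorem continuous_reducedI1 : Continuous reducedI1 := by
  unfold reducedI1
  fun_prop (disch := intro; positivity)

theorem reducedI1_one : reducedI1 1 = 3 * π / 4 := by
  norm_num [reducedI1, arctan_one]
  ring

theorem reducedI1_pos {t : ℝ} (ht₀ : 0 < t) (ht₁ : t ≤ 1) : 0 < reducedI1 t := by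
  have hpoly : 0 < t * (7 - t ^ 2) / 2 := by nlinarith
  have harctan : 0 < arctan t := arctan_pos.mpr ht₀
  have hrest : 0 ≤ t ^ 2 * (1 - t ^ 2) / (2 * (1 + t ^ 2)) := by
    apply div_nonneg (mul_nonneg (sq_nonneg t) _) (by positivity)
    nlinarith
  exact add_pos_of_pos_of_nonneg (mul_pos hpoly harctan) hrest

theorem reducedI1_le {t : ℝ} (ht₀ : 0 ≤ t) (ht₁ : t ≤ 1) : reducedI1 t ≤ 3 * π / 4 := by
  have harctan : arctan t ≤ π / 4 := arctan_one ▸ arctan_strictMono.monotone ht₁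
  have hrest : t ^ 2 * (1 - t ^ 2) / (2 * (1 + t ^ 2)) ≤ 1 - t := by
    rw [div_le_iff₀ (by positivity)]
    nlinarith [mul_nonneg (mul_nonneg ht₀ ht₀) (sub_nonneg.mpr ht₁)]
  have hgap : 1 - t ≤ π / 8 * (6 - 7 * t + t ^ 3) := by
    have hfactor : 6 - 7 * t + t ^ 3 = (1 - t) * ((3 + t) * (2 - t)) := by ring
    have hfour : 4 ≤ (3 + t) * (2 - t) := by nlinarith
    calc 1 - t ≤ π / 8 * ((1 - t) * 4) := by nlinarith [pi_gt_three]
      _ ≤ π / 8 * ((1 - t) * ((3 + t) * (2 - t))) := by gcongr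
      _ = π / 8 * (6 - 7 * t + t ^ 3) := by rw [hfactor]
  calc reducedI1 t
      ≤ t * (7 - t ^ 2) / 2 * (π / 4) + t ^ 2 * (1 - t ^ 2) / (2 * (1 + t ^ 2)) := by
        unfold reducedI1
        gcongr
        nlinarith
    _ ≤ 3 * π / 4 := by linarith

theorem I1_eq_sq_mul_reducedI1_sin_arctan (k ρ : ℝ) :
    I1 k ρ = k ^ 2 * reducedI1 (sin (arctan ρ)) := by
  have hs2 : √(1 + ρ ^ 2) ^ 2 = 1 + ρ ^ 2 := sq_sqrt (by positivity)
  rw [sin_arctan, I1, reducedI1]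
  field_simp
  rw [hs2]
  ring

theorem I1_pos {k ρ : ℝ} (hk : k ≠ 0) (hρ : 0 < ρ) : 0 < I1 k ρ := by
  rw [I1_eq_sq_mul_reducedI1_sin_arctan]
  exact mul_pos (by positivity) (reducedI1_pos (sin_arctan_pos.mpr hρ) (sin_le_one _))

theorem I1_le {ρ : ℝ} (k : ℝ) (hρ : 0 ≤ ρ) : I1 k ρ ≤ 3 * π / 4 * k ^ 2 := by
  rw [I1_eq_sq_mul_reducedI1_sin_arctan, mul_comm _ (k ^ 2)]
  gcongr
  exact reducedI1_le (sin_arctan_nonneg.mpr hρ) (sin_le_one _)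

theorem tendsto_I1_atTop (k : ℝ) : Tendsto (I1 k) atTop (𝓝 (3 * π / 4 * k ^ 2)) := by
  have h : Tendsto (fun ρ ↦ reducedI1 (sin (arctan ρ))) atTop (𝓝 (reducedI1 (sin (π / 2)))) :=
    ((continuous_reducedI1.comp continuous_sin).tendsto _).comp
      (tendsto_arctan_atTop.mono_right nhdsWithin_le_nhds)
  rw [sin_pi_div_two, reducedI1_one] at h
  rw [funext (I1_eq_sq_mul_reducedI1_sin_arctan k), mul_comm _ (k ^ 2)]
  exact h.const_mul (k ^ 2)

theorem isLUB_I1_image_Ioi (k : ℝ) : IsLUB (I1 k '' Ioi 0) (3 * π / 4 * k ^ 2) := by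
  refine ⟨?_, fun b hb ↦ le_of_tendsto (tendsto_I1_atTop k) ?_⟩
  · rintro _ ⟨ρ, hρ, rfl⟩
    exact I1_le k hρ.le
  · filter_upwards [eventually_gt_atTop 0] with ρ hρ
    exact hb ⟨ρ, hρ, rfl⟩

theorem I1_bounded_and_CRB_floor (k lam SNR : ℝ) (hk : 0 < k) (hlam : 0 < lam)
    (hklam : k = 2 * Real.pi / lam) (hSNR : 0 < SNR) :
    (∀ ρ : ℝ, 0 < ρ →
      0 < ρ * k ^ 2 / (2 * (1 + ρ ^ 2)) *
        ((7 + 6 * ρ ^ 2) / Real.sqrt (1 + ρ ^ 2) *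
            Real.arctan (ρ / Real.sqrt (1 + ρ ^ 2)) +
          ρ / (1 + 2 * ρ ^ 2))) ∧
    IsLUB
      ((fun ρ : ℝ =>
          ρ * k ^ 2 / (2 * (1 + ρ ^ 2)) *
            ((7 + 6 * ρ ^ 2) / Real.sqrt (1 + ρ ^ 2) *
                Real.arctan (ρ / Real.sqrt (1 + ρ ^ 2)) +
              ρ / (1 + 2 * ρ ^ 2))) '' Set.Ioi 0)
      (3 * Real.pi / 4 * k ^ 2) ∧
    (∀ ρ : ℝ, 0 < ρ →
      SNR⁻¹ /
        (ρ * k ^ 2 / (2 * (1 + ρ ^ 2)) *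
          ((7 + 6 * ρ ^ 2) / Real.sqrt (1 + ρ ^ 2) *
              Real.arctan (ρ / Real.sqrt (1 + ρ ^ 2)) +
            ρ / (1 + 2 * ρ ^ 2))) ≥
      SNR⁻¹ * lam ^ 2 / (3 * Real.pi ^ 3)) := by
  refine ⟨fun ρ hρ ↦ I1_pos hk.ne' hρ, isLUB_I1_image_Ioi k, fun ρ hρ ↦ ?_⟩
  have hsup : 3 * π / 4 * k ^ 2 = 3 * π ^ 3 / lam ^ 2 := by
    rw [hklam]
    field_simp
    ring
  have hle : I1 k ρ ≤ 3 * π ^ 3 / lam ^ 2 := hsup ▸ I1_le k hρ.le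
  calc SNR⁻¹ / I1 k ρ
      ≥ SNR⁻¹ / (3 * π ^ 3 / lam ^ 2) :=
        div_le_div_of_nonneg_left (by positivity) (I1_pos hk.ne' hρ) hle
    _ = SNR⁻¹ * lam ^ 2 / (3 * π ^ 3) := div_div_eq_mul_div _ _ _
end
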